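/- arXiv:2112.02061 — 2 statements merged into one kernel-verified Lean document; each statement's English description precedes it below -/
import Mathlib

section
/- Let K be a commutative ring and f: ℤ_{≥3} → K. For a Schröder tree T, set wt(T) = ∏_{v internal vertex of T} f(c(v)+1), and for m ≥ 1 let h̃(m) = Σ_T wt(T), the sum over all Schröder trees T on m leaves (so h̃(1) = 1 and h̃(2) = 0). Then the power series H̃(x) = Σ_{m≥1} h̃(m)x^m ∈ K[[x]] satisfies the functional equation H̃(x) = x + Σ_{d≥3} f(d)·H̃(x)^{d−1}, where the right-hand sum is a well-defined element of K[[x]] because H̃ has zero constant term. -/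
open PowerSeries

/-- Finite rooted plane trees: a tree is a (possibly empty) list of subtrees.
A leaf is a node with no children. -/
inductive PlaneTree : Type where
  | node : List PlaneTree → PlaneTree

namespace PlaneTree

/-- The number of leaves of a plane tree. -/
def leaves : PlaneTree → ℕ
  | node ts => if ts.isEmpty then 1 else (ts.attach.map (fun t => leaves t.1)).sum
decreasing_by have := List.sizeOf_lt_of_mem t.2; simp only [PlaneTree.node.sizeOf_spec]; omega

/-- A plane tree is a Schröder tree if every internal (non-leaf) vertex has at
least two children. -/
def isSchroder : PlaneTree → Prop
  | node ts => (ts.isEmpty ∨ 2 ≤ ts.length) ∧ ∀ t ∈ ts, isSchroder t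
decreasing_by have := List.sizeOf_lt_of_mem ‹_ ∈ ts›; simp only [PlaneTree.node.sizeOf_spec]; omega

/-- `wt(T) = ∏_{v internal} f(c(v)+1)`: the product over the internal vertices
of `T` of `f` evaluated at the degree `d(v) = c(v) + 1` of the vertex. -/
def weight {K : Type*} [CommRing K] (f : ℕ → K) : PlaneTree → K
  | node ts => if ts.isEmpty then 1
      else f (ts.length + 1) * (ts.attach.map (fun t => weight f t.1)).prod
decreasing_by have := List.sizeOf_lt_of_mem t.2; simp only [PlaneTree.node.sizeOf_spec]; omega

theorem leaves_node (ts : List PlaneTree) :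
    leaves (node ts) = if ts.isEmpty then 1 else (ts.map leaves).sum := by
  rw [leaves]
  congr 1
  exact congrArg List.sum (List.attach_map_val (l := ts) (f := leaves))

theorem weight_node {K : Type*} [CommRing K] (f : ℕ → K) (ts : List PlaneTree) :
    weight f (node ts) = if ts.isEmpty then 1
      else f (ts.length + 1) * (ts.map (weight f)).prod := by
  rw [weight]
  congr 2
  exact congrArg List.prod (List.attach_map_val (l := ts) (f := weight f))

theorem isSchroder_node (ts : List PlaneTree) :
    isSchroder (node ts) ↔ (ts.isEmpty ∨ 2 ≤ ts.length) ∧ ∀ t ∈ ts, isSchroder t := by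
  rw [isSchroder]

theorem one_le_leaves : ∀ T : PlaneTree, 1 ≤ T.leaves
  | node ts => by
    rw [leaves_node]
    rcases ts with _ | ⟨t, ts'⟩
    · simp
    · simp only [List.isEmpty_cons, if_false, List.map_cons, List.sum_cons]
      have := one_le_leaves t
      exact le_trans this (Nat.le_add_right _ _)

end PlaneTree

open PlaneTree

instance : Inhabited PlaneTree := ⟨PlaneTree.node []⟩
noncomputable instance : DecidableEq PlaneTree := Classical.decEq _

/-- The set of Schröder trees with `m` leaves. -/
def STset (m : ℕ) : Set PlaneTree := {T | T.isSchroder ∧ T.leaves = m}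

/-- The set of lists of `c` Schröder trees with `m` total leaves. -/
def Lset (c m : ℕ) : Set (List PlaneTree) :=
  {ts | ts.length = c ∧ (∀ t ∈ ts, t.isSchroder) ∧ (ts.map PlaneTree.leaves).sum = m}

theorem lists_finite {A : Set PlaneTree} (hA : A.Finite) (c : ℕ) :
    {l : List PlaneTree | l.length ≤ c ∧ ∀ x ∈ l, x ∈ A}.Finite := by
  haveI := hA.to_subtype
  have h1 : {l : List A | l.length ≤ c}.Finite := List.finite_length_le A c
  refine (h1.image (List.map Subtype.val)).subset ?_
  rintro l ⟨hlen, hmem⟩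
  refine ⟨l.attach.map (fun x => ⟨x.1, hmem x.1 x.2⟩), ?_, ?_⟩
  · simpa using hlen
  · rw [List.map_map]
    simp

theorem STset_finite (m : ℕ) : (STset m).Finite := by
  induction m using Nat.strong_induction_on with
  | _ m ih =>
    have hU : (⋃ k ∈ Finset.range m, STset k).Finite :=
      Set.Finite.biUnion (Finset.range m).finite_toSet (fun k _ => ih k (Finset.mem_range.mp ‹_›))
    refine ((lists_finite hU m).image PlaneTree.node |>.insert (PlaneTree.node [])).subset ?_
    rintro ⟨ts⟩ ⟨hS, hl⟩
    rcases ts with _ | ⟨t, ts'⟩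
    · exact Set.mem_insert _ _
    · refine Set.mem_insert_of_mem _ ⟨t :: ts', ⟨?_, ?_⟩, rfl⟩
      · -- length ≤ m : each child has at least one leaf
        rw [leaves_node] at hl
        simp only [List.isEmpty_cons, Bool.false_eq_true, if_false] at hl
        have h1 : ∀ i ∈ (t :: ts').map leaves, 1 ≤ i := by
          intro i hi
          obtain ⟨x, hx, rfl⟩ := List.mem_map.mp hi
          exact one_le_leaves x
        have h2 := List.length_le_sum_of_one_le _ h1
        rw [List.length_map] at h2
        omega
      · -- each child lies in some STset k, k < m
        intro x hx
        rw [isSchroder_node] at hS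
        have hxS : x.isSchroder := hS.2 x hx
        have hlen2 : 2 ≤ (t :: ts').length := by
          rcases hS.1 with h | h
          · simp at h
          · exact h
        -- leaves x < m
        have hxlt : x.leaves < m := by
          rw [leaves_node] at hl
          simp only [List.isEmpty_cons, Bool.false_eq_true, if_false] at hl
          have hmem : x.leaves ∈ (t :: ts').map leaves := List.mem_map_of_mem (f := leaves) hx
          obtain ⟨s, u, hsu⟩ := List.append_of_mem hmem
          have h1 : ∀ i ∈ (t :: ts').map leaves, 1 ≤ i := by
            intro i hi
            obtain ⟨y, hy, rfl⟩ := List.mem_map.mp hi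
            exact one_le_leaves y
          have hs1 : s.length ≤ s.sum := List.length_le_sum_of_one_le _
            (fun i hi => h1 i (hsu ▸ List.mem_append_left _ hi))
          have hu1 : u.length ≤ u.sum := List.length_le_sum_of_one_le _
            (fun i hi => h1 i (hsu ▸ List.mem_append_right _ (List.mem_cons_of_mem _ hi)))
          have hsum : s.sum + (x.leaves + u.sum) = m := by
            rw [← hl, hsu]; simp
          have hlength : s.length + 1 + u.length = ts'.length + 1 := by
            have := congrArg List.length hsu
            simp only [List.length_map, List.length_cons, List.length_append] at this
            omega
          simp only [List.length_cons] at hlen2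
          omega
        simp only [Set.mem_iUnion]
        exact ⟨x.leaves, ⟨Finset.mem_range.mpr hxlt, hxS, rfl⟩⟩

theorem Lset_finite (c m : ℕ) : (Lset c m).Finite := by
  have hU : (⋃ k ∈ Finset.range (m + 1), STset k).Finite :=
    Set.Finite.biUnion (Finset.range (m + 1)).finite_toSet (fun k _ => STset_finite k)
  refine (lists_finite hU c).subset ?_
  rintro l ⟨hlen, hS, hsum⟩
  refine ⟨hlen.le, fun x hx => ?_⟩
  have : x.leaves ≤ m := by
    rw [← hsum]
    exact List.le_sum_of_mem (List.mem_map_of_mem (f := leaves) hx)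
  simp only [Set.mem_iUnion]
  exact ⟨x.leaves, Finset.mem_range.mpr (Nat.lt_succ_of_le this), hS x hx, rfl⟩

/-- Finset of Schröder trees with `m` leaves. -/
noncomputable def STfin (m : ℕ) : Finset PlaneTree := (STset_finite m).toFinset

/-- Finset of lists of `c` Schröder trees with `m` total leaves. -/
noncomputable def Lfin (c m : ℕ) : Finset (List PlaneTree) := (Lset_finite c m).toFinset

theorem mem_STfin {T : PlaneTree} {m : ℕ} :
    T ∈ STfin m ↔ T.isSchroder ∧ T.leaves = m := by
  simp [STfin, Set.Finite.mem_toFinset, STset]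

theorem mem_Lfin {l : List PlaneTree} {c m : ℕ} :
    l ∈ Lfin c m ↔ l.length = c ∧ (∀ t ∈ l, t.isSchroder) ∧ (l.map leaves).sum = m := by
  simp [Lfin, Set.Finite.mem_toFinset, Lset]

section Main

variable {K : Type*} [CommRing K] (f : ℕ → K)

theorem coeff_pow_eq (c m : ℕ) :
    coeff m ((PowerSeries.mk fun k => ∑ T ∈ STfin k, weight f T) ^ c)
      = ∑ ts ∈ Lfin c m, (ts.map (weight f)).prod := by
  induction c generalizing m with
  | zero =>
    rw [pow_zero, coeff_one]
    rcases m with _ | m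
    · have h0 : Lfin 0 0 = {([] : List PlaneTree)} := by
        ext l
        simp [mem_Lfin, List.length_eq_zero_iff]
        rintro rfl
        simp
      rw [h0]
      simp
    · have h0 : Lfin 0 (m + 1) = ∅ := by
        ext l
        simp only [mem_Lfin, Finset.notMem_empty, iff_false, not_and, List.length_eq_zero_iff]
        rintro rfl _
        simp
      rw [h0]
      simp
  | succ c ih =>
    rw [pow_succ', coeff_mul]
    have step1 : ∀ p ∈ Finset.HasAntidiagonal.antidiagonal m,
        (coeff p.1 (PowerSeries.mk fun k => ∑ T ∈ STfin k, weight f T)) *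
          coeff p.2 ((PowerSeries.mk fun k => ∑ T ∈ STfin k, weight f T) ^ c)
        = ∑ q ∈ STfin p.1 ×ˢ Lfin c p.2, weight f q.1 * (q.2.map (weight f)).prod := by
      intro p _
      rw [coeff_mk, ih, Finset.sum_mul_sum, ← Finset.sum_product']
    rw [Finset.sum_congr rfl step1, Finset.sum_sigma']
    refine Finset.sum_nbij' (fun x => x.2.1 :: x.2.2)
      (fun l => ⟨(l.headI.leaves, (l.tail.map PlaneTree.leaves).sum), (l.headI, l.tail)⟩)
      ?_ ?_ ?_ ?_ ?_
    · rintro ⟨⟨a, b⟩, ⟨t, ts⟩⟩ hx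
      simp only [Finset.mem_sigma, Finset.HasAntidiagonal.mem_antidiagonal, Finset.mem_product,
        mem_STfin, mem_Lfin] at hx
      obtain ⟨hab, ⟨htS, htl⟩, hlen, hallS, hsum⟩ := hx
      rw [mem_Lfin]
      refine ⟨by simp [hlen], ?_, ?_⟩
      · intro x hx
        rcases List.mem_cons.mp hx with rfl | hx
        · exact htS
        · exact hallS x hx
      · simp only [List.map_cons, List.sum_cons, htl, hsum, hab]
    · intro l hl
      rw [mem_Lfin] at hl
      obtain ⟨hlen, hallS, hsum⟩ := hl
      rcases l with _ | ⟨t, ts⟩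
      · simp at hlen
      · simp only [Finset.mem_sigma, Finset.HasAntidiagonal.mem_antidiagonal, Finset.mem_product,
          mem_STfin, mem_Lfin, List.headI_cons, List.tail_cons]
        simp only [List.map_cons, List.sum_cons] at hsum
        exact ⟨hsum, ⟨hallS t List.mem_cons_self, trivial⟩, by simpa using hlen,
          fun x hx => hallS x (List.mem_cons_of_mem t hx), trivial⟩
    · rintro ⟨⟨a, b⟩, ⟨t, ts⟩⟩ hx
      simp only [Finset.mem_sigma, Finset.HasAntidiagonal.mem_antidiagonal, Finset.mem_product,
        mem_STfin, mem_Lfin] at hx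
      obtain ⟨hab, ⟨htS, htl⟩, hlen, hallS, hsum⟩ := hx
      simp only [List.headI_cons, List.tail_cons, htl, hsum]
    · intro l hl
      rw [mem_Lfin] at hl
      rcases l with _ | ⟨t, ts⟩
      · simp at hl
      · rfl
    · rintro ⟨⟨a, b⟩, ⟨t, ts⟩⟩ _
      simp

theorem STfin_decomp (m : ℕ) (hm : 2 ≤ m) :
    STfin m = (Finset.Icc 2 m).biUnion (fun c => (Lfin c m).image PlaneTree.node) := by
  ext T
  simp only [Finset.mem_biUnion, Finset.mem_image, Finset.mem_Icc, mem_STfin, mem_Lfin]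
  constructor
  · rintro ⟨hS, hl⟩
    obtain ⟨ts⟩ := T
    rw [isSchroder_node] at hS
    rcases ts with _ | ⟨t, ts'⟩
    · rw [leaves_node] at hl
      simp at hl
      omega
    · have hlen2 : 2 ≤ (t :: ts').length := by
        rcases hS.1 with h | h
        · simp at h
        · exact h
      rw [leaves_node] at hl
      simp only [List.isEmpty_cons, Bool.false_eq_true, if_false] at hl
      have h1 : ∀ i ∈ (t :: ts').map leaves, 1 ≤ i := by
        intro i hi
        obtain ⟨x, hx, rfl⟩ := List.mem_map.mp hi
        exact one_le_leaves x
      have h2 := List.length_le_sum_of_one_le _ h1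
      rw [List.length_map] at h2
      exact ⟨(t :: ts').length, ⟨hlen2, by omega⟩, t :: ts', ⟨rfl, hS.2, hl⟩, rfl⟩
  · rintro ⟨c, ⟨hc2, _⟩, ts, ⟨hlen, hallS, hsum⟩, rfl⟩
    have hne : ts ≠ [] := by
      rintro rfl
      simp at hlen
      omega
    refine ⟨?_, ?_⟩
    · rw [isSchroder_node]
      exact ⟨Or.inr (by omega), hallS⟩
    · rw [leaves_node, if_neg (by simpa using hne)]
      exact hsum

theorem sum_STfin_eq (m : ℕ) (hm : 2 ≤ m) :
    ∑ T ∈ STfin m, weight f T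
      = ∑ c ∈ Finset.Icc 2 m, f (c + 1) * ∑ ts ∈ Lfin c m, (ts.map (weight f)).prod := by
  rw [STfin_decomp m hm, Finset.sum_biUnion]
  · refine Finset.sum_congr rfl fun c hc => ?_
    rw [Finset.sum_image (by intro x _ y _ h; injection h), Finset.mul_sum]
    refine Finset.sum_congr rfl fun ts hts => ?_
    rw [mem_Lfin] at hts
    obtain ⟨hlen, _, _⟩ := hts
    have hne : ts ≠ [] := by
      rintro rfl
      simp only [List.length_nil] at hlen
      rw [← hlen] at hc
      simp at hc
    rw [weight_node, if_neg (by simpa using hne), hlen]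
  · -- pairwise disjoint
    intro c hc c' hc' hne
    simp only [Function.onFun]
    rw [Finset.disjoint_left]
    rintro T hT hT'
    simp only [Finset.mem_image, mem_Lfin] at hT hT'
    obtain ⟨ts, ⟨hlen, _, _⟩, rfl⟩ := hT
    obtain ⟨ts', ⟨hlen', _, _⟩, h⟩ := hT'
    injection h with h
    subst h
    exact hne (hlen' ▸ hlen ▸ rfl)

end Main

/-- **The functional equation for weighted Schröder trees.**  Let `K` be a
commutative ring and `f : ℤ_{≥3} → K`.  Let `h̃(m) = Σ_T wt(T)` over Schröder
trees `T` on `m` leaves, and `H̃(x) = Σ_{m≥1} h̃(m)x^m`.  Then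
`H̃(x) = x + Σ_{d≥3} f(d)·H̃(x)^{d−1}`, where the infinite sum on the right is
the well-defined power series whose `n`-th coefficient is
`Σ_{3 ≤ d ≤ n+1} f(d)·[xⁿ](H̃^{d−1})` (the terms with `d > n+1` contribute
nothing since `H̃` has zero constant term). -/
theorem schroder_functional_equation {K : Type*} [CommRing K] (f : ℕ → K)
    (Ht : PowerSeries K)
    (hHt : Ht = PowerSeries.mk fun m =>
      ∑ᶠ (T : {T : PlaneTree // T.isSchroder ∧ T.leaves = m}), T.1.weight f) :
    Ht = X + PowerSeries.mk (fun n =>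
      ∑ d ∈ Finset.Icc 3 (n + 1), f d * coeff n (Ht ^ (d - 1))) := by
  have hS : Ht = PowerSeries.mk fun m => ∑ T ∈ STfin m, weight f T := by
    rw [hHt]
    refine congrArg PowerSeries.mk (funext fun m => ?_)
    have e1 : ∑ᶠ (T : {T : PlaneTree // T.isSchroder ∧ T.leaves = m}), T.1.weight f
        = ∑ᶠ T ∈ STset m, weight f T := finsum_set_coe_eq_finsum_mem (STset m)
    rw [e1, finsum_mem_eq_finite_toFinset_sum _ (STset_finite m)]
    rfl
  subst hS
  ext n
  rw [map_add, coeff_mk, coeff_X, coeff_mk]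
  rcases n with _ | _ | n
  · -- n = 0
    have h0 : STfin 0 = ∅ := by
      ext T
      simp only [mem_STfin, Finset.notMem_empty, iff_false, not_and]
      intro _
      have := one_le_leaves T
      omega
    rw [h0]
    simp
  · -- n = 1
    have h1 : STfin 1 = {PlaneTree.node []} := by
      ext T
      simp only [mem_STfin, Finset.mem_singleton]
      constructor
      · rintro ⟨hS, hl⟩
        obtain ⟨ts⟩ := T
        rcases ts with _ | ⟨t, ts'⟩
        · rfl
        · exfalso
          rw [isSchroder_node] at hS
          have hlen2 : 2 ≤ (t :: ts').length := by
            rcases hS.1 with h | h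
            · simp at h
            · exact h
          rw [leaves_node] at hl
          simp only [List.isEmpty_cons, Bool.false_eq_true, if_false] at hl
          have h1 : ∀ i ∈ (t :: ts').map leaves, 1 ≤ i := by
            intro i hi
            obtain ⟨x, hx, rfl⟩ := List.mem_map.mp hi
            exact one_le_leaves x
          have h2 := List.length_le_sum_of_one_le _ h1
          rw [List.length_map] at h2
          simp only [List.length_cons] at hlen2 h2
          omega
      · rintro rfl
        refine ⟨?_, ?_⟩
        · rw [isSchroder_node]
          simp
        · rw [leaves_node]
          simp
    rw [h1]
    rw [Finset.sum_singleton, weight_node]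
    simp
  · -- n ≥ 2
    rw [if_neg (by omega), zero_add, sum_STfin_eq f (n + 2) (by omega)]
    refine Finset.sum_nbij' (fun c => c + 1) (fun d => d - 1) ?_ ?_ ?_ ?_ ?_
    · intro c hc
      simp only [Finset.mem_Icc] at hc ⊢
      omega
    · intro d hd
      simp only [Finset.mem_Icc] at hd ⊢
      omega
    · intro c _
      omega
    · intro d hd
      simp only [Finset.mem_Icc] at hd
      omega
    · intro c hc
      simp only [Finset.mem_Icc] at hc
      rw [Nat.add_sub_cancel, coeff_pow_eq]
end

section
/- Over the polynomial ring R = ℚ[y], let C(x) = x / ((1−x)(1−xy)) ∈ R[[x]] and let D = C^{⟨−1⟩}. Set G₋(x) = x(1+y) − xy·D(x) ∈ R[[x]] (this is the q = −1 specialization of the generating function of contracted Grassmannian trees). Then the compositional inverse of x/(1+G₋(x)) equals x/((1−x)(1−xy)); equivalently, substituting x/((1−x)(1−xy)) into x/(1+G₋(x)) yields x. In particular, the q = −1 specialization of the Grassmannian forest generating function equals 1/((1−x)(1−xy)) = Σ_{n≥0} xⁿ Σ_{0≤k≤n} yᵏ, all of whose coefficients equal 1. -/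
open PowerSeries

/-- Composition `f ∘ g` of formal power series, intended for `g` with zero
constant term. -/
noncomputable def pscomp {R : Type*} [CommRing R] (f g : PowerSeries R) : PowerSeries R :=
  PowerSeries.mk fun n => ∑ k ∈ Finset.range (n + 1), (coeff k f) * (coeff n (g ^ k))

/-- The variable `y`, viewed as a constant power series over `R = ℚ[y]`. -/
noncomputable def Y : PowerSeries (Polynomial ℚ) :=
  PowerSeries.C Polynomial.X

section aux
variable {R : Type*} [CommRing R] {g : PowerSeries R}

lemma coeff_pow_of_lt (hg : constantCoeff g = 0) {n k : ℕ} (h : n < k) :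
    coeff n (g ^ k) = 0 := by
  have hX : (X : PowerSeries R) ∣ g := X_dvd_iff.mpr hg
  exact (X_pow_dvd_iff.mp (pow_dvd_pow_of_dvd hX k)) n h

lemma coeff_pscomp (hg : constantCoeff g = 0) (f : PowerSeries R) {n N : ℕ} (hn : n < N) :
    coeff n (pscomp f g)
      = coeff n (∑ k ∈ Finset.range N, PowerSeries.C (coeff k f) * g ^ k) := by
  simp only [pscomp, coeff_mk, map_sum, coeff_C_mul]
  apply Finset.sum_subset (Finset.range_subset_range.mpr hn)
  intro k _ hk'
  have hnk : n < k := by simp only [Finset.mem_range] at hk'; omega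
  rw [coeff_pow_of_lt hg hnk, mul_zero]

lemma coeff_mul_congr {A A' B B' : PowerSeries R} {n : ℕ}
    (hA : ∀ i ≤ n, coeff i A = coeff i A')
    (hB : ∀ j ≤ n, coeff j B = coeff j B') :
    coeff n (A * B) = coeff n (A' * B') := by
  rw [coeff_mul, coeff_mul]
  apply Finset.sum_congr rfl
  intro p hp
  rw [Finset.HasAntidiagonal.mem_antidiagonal] at hp
  rw [hA p.1 (by omega), hB p.2 (by omega)]

lemma sum_aux {M : Type*} [AddCommMonoid M] (n : ℕ) (F : ℕ → ℕ → M)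
    (hF : ∀ k l, n < k + l → F k l = 0) :
    ∑ k ∈ Finset.range (n+1), ∑ l ∈ Finset.range (n+1), F k l
      = ∑ m ∈ Finset.range (n+1), ∑ p ∈ Finset.HasAntidiagonal.antidiagonal m, F p.1 p.2 := by
  classical
  rw [← Finset.sum_product']
  rw [← Finset.sum_biUnion (by
    intro a _ b _ hab
    simp only [Finset.disjoint_left, Finset.HasAntidiagonal.mem_antidiagonal]
    intro p hpa hpb; exact hab (hpa ▸ hpb))]
  symm
  apply Finset.sum_subset
  · intro p hp
    simp only [Finset.mem_biUnion, Finset.mem_range, Finset.HasAntidiagonal.mem_antidiagonal] at hp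
    obtain ⟨m, hm, hpm⟩ := hp
    simp only [Finset.mem_product, Finset.mem_range]
    omega
  · intro p _ hp
    apply hF
    simp only [Finset.mem_biUnion, Finset.mem_range, Finset.HasAntidiagonal.mem_antidiagonal] at hp
    by_contra hc
    exact hp ⟨p.1 + p.2, by omega, rfl⟩

lemma pscomp_mul (hg : constantCoeff g = 0) (f h : PowerSeries R) :
    pscomp (f * h) g = pscomp f g * pscomp h g := by
  ext n
  have h1 : coeff n (pscomp f g * pscomp h g)
      = coeff n ((∑ k ∈ Finset.range (n+1), PowerSeries.C (coeff k f) * g ^ k)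
        * (∑ k ∈ Finset.range (n+1), PowerSeries.C (coeff k h) * g ^ k)) :=
    coeff_mul_congr (fun i hi => coeff_pscomp hg f (by omega))
      (fun j hj => coeff_pscomp hg h (by omega))
  have h2 : (∑ k ∈ Finset.range (n+1), PowerSeries.C (coeff k f) * g ^ k)
        * (∑ k ∈ Finset.range (n+1), PowerSeries.C (coeff k h) * g ^ k)
      = ∑ k ∈ Finset.range (n+1), ∑ l ∈ Finset.range (n+1),
          PowerSeries.C (coeff k f * coeff l h) * g ^ (k + l) := by
    rw [Finset.sum_mul_sum]
    apply Finset.sum_congr rfl; intro k _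
    apply Finset.sum_congr rfl; intro l _
    rw [map_mul, pow_add]; ring
  rw [h1, h2]
  rw [map_sum]
  simp only [map_sum, coeff_C_mul]
  rw [sum_aux n (fun k l => (coeff k f * coeff l h) * coeff n (g ^ (k + l)))
    (fun k l hkl => by
      show _ * coeff n (g ^ (k + l)) = 0
      rw [coeff_pow_of_lt hg hkl, mul_zero])]
  simp only [pscomp, coeff_mk, coeff_mul, Finset.sum_mul]
  apply Finset.sum_congr rfl; intro m hm
  apply Finset.sum_congr rfl; intro p hp
  rw [Finset.HasAntidiagonal.mem_antidiagonal] at hp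
  rw [hp]

lemma pscomp_sub (f h : PowerSeries R) : pscomp (f - h) g = pscomp f g - pscomp h g := by
  ext n
  simp [pscomp, sub_mul, Finset.sum_sub_distrib]

lemma pscomp_one : pscomp (1 : PowerSeries R) g = 1 := by
  ext n
  simp only [pscomp, coeff_mk, coeff_one, ite_mul, one_mul, zero_mul]
  rw [Finset.sum_ite_eq' (Finset.range (n+1)) 0 (fun k => coeff n (g ^ k))]
  simp

lemma pscomp_C (r : R) : pscomp (PowerSeries.C r) g = PowerSeries.C r := by
  ext n
  simp only [pscomp, coeff_mk, coeff_C, ite_mul, zero_mul]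
  rw [Finset.sum_ite_eq' (Finset.range (n+1)) 0 (fun k => r * coeff n (g ^ k))]
  simp [coeff_C]

lemma pscomp_X (hg : constantCoeff g = 0) : pscomp (X : PowerSeries R) g = g := by
  ext n
  simp only [pscomp, coeff_mk, coeff_X, ite_mul, one_mul, zero_mul]
  rw [Finset.sum_ite_eq' (Finset.range (n+1)) 1 (fun k => coeff n (g ^ k))]
  cases n with
  | zero => simp [hg]
  | succ m => simp

end aux

lemma pscomp_Y {g : PowerSeries (Polynomial ℚ)} : pscomp Y g = Y := by
  unfold Y
  exact pscomp_C _

/-- **The `q = −1` specialization** (used to compute the Euler characteristic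
of the momentum amplituhedron).  Over `R = ℚ[y]`, let
`C(x) = x/((1−x)(1−xy))` (the unique series with `C·(1−x)(1−xy) = x`), let
`D = C^{⟨−1⟩}`, and set `G₋(x) = x(1+y) − xy·D(x)`, the `q = −1`
specialization of the contracted Grassmannian tree generating function.
Then the compositional inverse of `x/(1+G₋)` equals `C = x/((1−x)(1−xy))`;
in particular the `q = −1` Grassmannian forest generating function is
`(1/x)·C = 1/((1−x)(1−xy)) = Σ_{n≥0} xⁿ Σ_{0≤k≤n} yᵏ`, all of whose
coefficients equal `1`. -/
theorem q_neg_one_specialization (C D Gm : PowerSeries (Polynomial ℚ))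
    (hC : C * ((1 - X) * (1 - X * Y)) = X)
    (hD0 : constantCoeff D = 0)
    (hCD : pscomp C D = X) (hDC : pscomp D C = X)
    (hGm : Gm = X * (1 + Y) - X * Y * D) :
    (∀ A : PowerSeries (Polynomial ℚ), A * (1 + Gm) = X →
      pscomp A C = X ∧ pscomp C A = X) ∧
    C = X * PowerSeries.mk (fun n => ∑ k ∈ Finset.range (n + 1), (Polynomial.X : Polynomial ℚ) ^ k) := by
  constructor
  · -- key identity: substitute D into hC
    have hkey : X * ((1 - D) * (1 - D * Y)) = D := by
      have h2 : pscomp (C * ((1 - X) * (1 - X * Y))) D = pscomp X D := by rw [hC]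
      rw [pscomp_mul hD0, pscomp_mul hD0, pscomp_sub, pscomp_sub, pscomp_mul hD0,
        pscomp_one, pscomp_X hD0, pscomp_Y, hCD] at h2
      exact h2
    have hD : D * (1 + Gm) = X := by
      rw [hGm]
      linear_combination -hkey
    intro A hA
    have hne : (1 + Gm : PowerSeries (Polynomial ℚ)) ≠ 0 := by
      intro h0
      have : constantCoeff (1 + Gm) = 1 := by
        simp [hGm, map_add, map_sub, map_mul, constantCoeff_X]
      rw [h0, map_zero] at this
      exact one_ne_zero this.symm
    have hAD : A = D := mul_right_cancel₀ hne (hA.trans hD.symm)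
    rw [hAD]
    exact ⟨hDC, hCD⟩
  · set S : PowerSeries (Polynomial ℚ) :=
      PowerSeries.mk (fun n => ∑ k ∈ Finset.range (n + 1), (Polynomial.X : Polynomial ℚ) ^ k)
      with hSdef
    set E : PowerSeries (Polynomial ℚ) := PowerSeries.mk (fun _ => 1) with hEdef
    have hSE : S * (1 - X * Y) = E := by
      ext n
      rw [mul_sub, mul_one, map_sub]
      have hxy : S * (X * Y) = (S * X) * PowerSeries.C Polynomial.X := by
        unfold Y; ring
      rw [hxy, coeff_mul_C]
      cases n with
      | zero => simp [hSdef, hEdef]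
      | succ m =>
          rw [coeff_succ_mul_X]
          simp only [hSdef, hEdef, coeff_mk]
          congr 1
          rw [geom_sum_succ]
          ring
    have hE1 : E * (1 - X) = 1 := by
      ext n
      rw [mul_sub, mul_one, map_sub]
      cases n with
      | zero => simp [hEdef]
      | succ m => rw [coeff_succ_mul_X]; simp [hEdef]
    have hS : S * ((1 - X) * (1 - X * Y)) = 1 := by
      calc S * ((1 - X) * (1 - X * Y)) = (S * (1 - X * Y)) * (1 - X) := by ring
        _ = 1 := by rw [hSE, hE1]
    calc C = C * (S * ((1 - X) * (1 - X * Y))) := by rw [hS, mul_one]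
      _ = (C * ((1 - X) * (1 - X * Y))) * S := by ring
      _ = X * S := by rw [hC]
end
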